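/- arXiv:1809.02314 — 4 statements merged into one kernel-verified Lean document; each statement's English description precedes it below -/
import Mathlib

section
/- Let l be a nonnegative integer, C ∈ [0,1], v* ≥ 0, and let Δ_1, …, Δ_l and r_1, …, r_l be nonnegative reals such that Δ_i ≥ C·(v* − Σ_{j=1}^{i−1} Δ_j) − r_i for every i ∈ [l]. Then Σ_{i=1}^{l} Δ_i ≥ (1 − (1 − C)^l)·v* − Σ_{i=1}^{l} r_i ≥ (1 − exp(−C·l))·v* − Σ_{i=1}^{l} r_i. -/
/-!
Each step closes a `C`-fraction of the remaining gap `v - S i` up to the loss `r i`, so the gap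
contracts by the factor `1 - C` per step; the losses only accumulate, since `1 - C ≤ 1` and
`0 ≤ C` give `(1 - C) R + r ≤ R + r`. Finally `1 - C ≤ exp (-C)`.
-/

open Finset

theorem le_sum_range_of_le_mul_gap_sub {α : Type*} [CommRing α] [LinearOrder α]
    [IsStrictOrderedRing α] {C v : α} (hC0 : 0 ≤ C) (hC1 : C ≤ 1) {Δ r : ℕ → α} {l : ℕ}
    (hr : ∀ i < l, 0 ≤ r i) (h : ∀ i < l, C * (v - ∑ j ∈ range i, Δ j) - r i ≤ Δ i) :
    (1 - (1 - C) ^ l) * v - ∑ i ∈ range l, r i ≤ ∑ i ∈ range l, Δ i := by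
  induction l with
  | zero => simp
  | succ n ih =>
    have ih := ih (fun i hi => hr i (by omega)) (fun i hi => h i (by omega))
    have hR : 0 ≤ ∑ i ∈ range n, r i := sum_nonneg fun i hi => hr i (by simp at hi; omega)
    set S := ∑ i ∈ range n, Δ i
    set R := ∑ i ∈ range n, r i
    calc (1 - (1 - C) ^ (n + 1)) * v - ∑ i ∈ range (n + 1), r i
        = (1 - C) * ((1 - (1 - C) ^ n) * v - R) + C * v - r n - C * R := by
          rw [sum_range_succ]; ring
      _ ≤ (1 - C) * S + C * v - r n := by
          nlinarith [mul_le_mul_of_nonneg_left ih (sub_nonneg.2 hC1), mul_nonneg hC0 hR]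
      _ = S + (C * (v - S) - r n) := by ring
      _ ≤ ∑ i ∈ range (n + 1), Δ i := by
          rw [sum_range_succ]; gcongr; exact h n n.lt_succ_self

theorem Real.one_sub_pow_le_exp_neg_mul {C : ℝ} (hC1 : C ≤ 1) (l : ℕ) :
    (1 - C) ^ l ≤ Real.exp (-(C * l)) :=
  calc (1 - C) ^ l ≤ Real.exp (-C) ^ l :=
        pow_le_pow_left₀ (sub_nonneg.2 hC1) (by linarith [Real.add_one_le_exp (-C)]) l
    _ = Real.exp (-(C * l)) := by rw [← Real.exp_nat_mul]; ring_nf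

theorem stmt0_general (l : ℕ) (C vstar : ℝ) (hC0 : 0 ≤ C) (hC1 : C ≤ 1) (hv : 0 ≤ vstar)
    (Δ r : ℕ → ℝ) (hr : ∀ i, i < l → 0 ≤ r i)
    (h : ∀ i, i < l → Δ i ≥ C * (vstar - ∑ j ∈ Finset.range i, Δ j) - r i) :
    (∑ i ∈ Finset.range l, Δ i ≥
        (1 - (1 - C) ^ l) * vstar - ∑ i ∈ Finset.range l, r i) ∧
    ((1 - (1 - C) ^ l) * vstar - ∑ i ∈ Finset.range l, r i ≥
        (1 - Real.exp (-(C * l))) * vstar - ∑ i ∈ Finset.range l, r i) := by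
  refine ⟨le_sum_range_of_le_mul_gap_sub hC0 hC1 hr h, ?_⟩
  have := Real.one_sub_pow_le_exp_neg_mul hC1 l
  gcongr

/-- If `Δ i ≥ C * (v* - ∑_{j<i} Δ j) - r i` for every `i < l`, with
`C ∈ [0,1]`, `v* ≥ 0` and all `Δ i, r i` nonnegative, then
`∑_{i<l} Δ i ≥ (1 - (1 - C)^l) v* - ∑_{i<l} r i ≥ (1 - exp (-C l)) v* - ∑_{i<l} r i`. -/
theorem stmt0 (l : ℕ) (C vstar : ℝ) (hC0 : 0 ≤ C) (hC1 : C ≤ 1) (hv : 0 ≤ vstar)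
    (Δ r : ℕ → ℝ) (hΔ : ∀ i, i < l → 0 ≤ Δ i) (hr : ∀ i, i < l → 0 ≤ r i)
    (h : ∀ i, i < l → Δ i ≥ C * (vstar - ∑ j ∈ Finset.range i, Δ j) - r i) :
    (∑ i ∈ Finset.range l, Δ i ≥
        (1 - (1 - C) ^ l) * vstar - ∑ i ∈ Finset.range l, r i) ∧
    ((1 - (1 - C) ^ l) * vstar - ∑ i ∈ Finset.range l, r i ≥
        (1 - Real.exp (-(C * l))) * vstar - ∑ i ∈ Finset.range l, r i) :=
  stmt0_general l C vstar hC0 hC1 hv Δ r hr h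
end

section
/- For every positive integer k and every positive integer T with T ≥ k² and k dividing T, there exist a ground set V of 2k atoms and T-tuples (Z_1, …, Z_T), (Z*_1, …, Z*_T) of subsets of V, each with total size at most T (Σ_t |Z_t| ≤ T and Σ_t |Z*_t| ≤ T) and each using at most k distinct atoms, such that no list of at most 2k − 2 feasible replacements of (Z_1, …, Z_T) with respect to the family I = {(Y_1, …, Y_T) : Σ_{t=1}^T |Y_t| ≤ T} covers (Z*_1, …, Z*_T). Hence the replacement sparsity parameter of the average sparsity constraint without individual sparsity is at least 2k − 1. (Such tuples are given by Z_t = {v_1, …, v_k} for 1 ≤ t ≤ T/k and Z_t = ∅ otherwise, Z*_t = {v_{k+1}} for 1 ≤ t ≤ T − k + 1 and Z*_{T−k+i} = {v_{k+i}} for i = 2, …, k, where V = {v_1, …, v_{2k}}.) -/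
/-!
`Z` fills the first `T / k` slots with the `k` low atoms and so uses up the whole budget `T`.
A feasible replacement may delete at most one element per slot, hence only in those `T / k`
slots, and must pay for every added element with a deleted one: it adds its atom in at most
`T / k` slots. The high atoms of `Z*` do not occur in `Z`, so each replacement serves a single
high atom. The atom `v_{k+1}` is wanted in `T - k + 1 > (k - 1) T / k` slots and so needs `k`
replacements, and each of the other `k - 1` high atoms needs one.
-/

/-- `Z'` is a replacement of the `T`-tuple `Z` with respect to atom `a`:
for every `t`, `Z' t \ Z t ⊆ {a}` and at most one element is removed from `Z t`. -/
def IsReplacement {V : Type*} [DecidableEq V] {T : ℕ}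
    (Z Z' : Fin T → Finset V) (a : V) : Prop :=
  ∀ t, Z' t \ Z t ⊆ {a} ∧ (Z t \ Z' t).card ≤ 1

/-- The list `W` of `p` tuples is a list of feasible replacements of `Z`
(with respect to the family `I`) that covers `Z*`: each `W r` is a replacement of `Z`
with respect to some atom and belongs to `I`; each element of `Z* t \ Z t` is added in
at least one replacement; each element of `Z t \ Z* t` is removed in at most one. -/
def CoversList {V : Type*} [DecidableEq V] {T p : ℕ}
    (I : Set (Fin T → Finset V)) (Z Zstar : Fin T → Finset V)
    (W : Fin p → Fin T → Finset V) : Prop :=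
  (∀ r, (∃ a : V, IsReplacement Z (W r) a) ∧ W r ∈ I) ∧
  (∀ t : Fin T, ∀ x ∈ Zstar t \ Z t, ∃ r, x ∈ W r t \ Z t) ∧
  (∀ t : Fin T, ∀ x ∈ Z t \ Zstar t, ∀ r r' : Fin p,
      x ∈ Z t \ W r t → x ∈ Z t \ W r' t → r = r')

open Finset

section Replacements

variable {ι V : Type*} [DecidableEq V] {T p : ℕ}

theorem card_filter_sdiff_nonempty_le [Fintype ι] {Z W : ι → Finset V}
    (hdel : ∀ t, #(Z t \ W t) ≤ 1) (hsum : ∑ t, #(W t) ≤ ∑ t, #(Z t)) :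
    #{t | (W t \ Z t).Nonempty} ≤ #{t | (Z t).Nonempty} := by
  have hsdiff : ∑ t, #(W t \ Z t) ≤ ∑ t, #(Z t \ W t) := by
    simp only [← fun t => card_sdiff_add_card_inter (W t) (Z t),
      ← fun t => card_sdiff_add_card_inter (Z t) (W t), sum_add_distrib, inter_comm] at hsum
    omega
  calc #{t | (W t \ Z t).Nonempty}
      = ∑ t, if (W t \ Z t).Nonempty then 1 else 0 := card_filter _ _
    _ ≤ ∑ t, #(W t \ Z t) := sum_le_sum fun t _ => by
      split_ifs with h
      exacts [h.card_pos, Nat.zero_le _]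
    _ ≤ ∑ t, #(Z t \ W t) := hsdiff
    _ ≤ ∑ t, if (Z t).Nonempty then 1 else 0 := sum_le_sum fun t _ => by
      split_ifs with h
      exacts [hdel t, by simp [not_nonempty_iff_eq_empty.mp h]]
    _ = #{t | (Z t).Nonempty} := (card_filter _ _).symm

theorem IsReplacement.eq_of_mem_sdiff {Z W : Fin T → Finset V} {a x : V} {t : Fin T}
    (h : IsReplacement Z W a) (hx : x ∈ W t \ Z t) : x = a :=
  mem_singleton.mp ((h t).1 hx)

def addingReplacements (Z : Fin T → Finset V) (W : Fin p → Fin T → Finset V) (x : V) :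
    Finset (Fin p) :=
  {r | ∃ t, x ∈ W r t \ Z t}

theorem CoversList.sum_card_addingReplacements_le {I : Set (Fin T → Finset V)}
    {Z Zstar : Fin T → Finset V} {W : Fin p → Fin T → Finset V}
    (hcov : CoversList I Z Zstar W) (s : Finset V) :
    ∑ x ∈ s, #(addingReplacements Z W x) ≤ p := by
  rw [← card_biUnion fun x _ y _ hxy => ?_]
  · exact (card_le_univ _).trans_eq (Fintype.card_fin p)
  simp only [Function.onFun, disjoint_left, addingReplacements, mem_filter, mem_univ, true_and]
  rintro r ⟨t, hx⟩ ⟨t', hy⟩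
  obtain ⟨a, ha⟩ := (hcov.1 r).1
  exact hxy ((ha.eq_of_mem_sdiff hx).trans (ha.eq_of_mem_sdiff hy).symm)

theorem CoversList.card_filter_le_mul {N : ℕ} {Z Zstar : Fin T → Finset V}
    {W : Fin p → Fin T → Finset V} (hcov : CoversList {Y | ∑ t, #(Y t) ≤ N} Z Zstar W)
    (hN : N ≤ ∑ t, #(Z t)) (x : V) :
    #{t | x ∈ Zstar t \ Z t} ≤ #(addingReplacements Z W x) * #{t | (Z t).Nonempty} := by
  refine (card_le_card fun t ht => ?_).trans (card_biUnion_le_card_mul _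
    (fun r => {t | (W r t \ Z t).Nonempty}) _ fun r _ => ?_)
  · obtain ⟨r, hr⟩ := hcov.2.1 t x (mem_filter.mp ht).2
    simp only [mem_biUnion, addingReplacements, mem_filter, mem_univ, true_and]
    exact ⟨r, ⟨t, hr⟩, x, hr⟩
  · obtain ⟨⟨a, ha⟩, hW⟩ := hcov.1 r
    exact card_filter_sdiff_nonempty_le (fun t => (ha t).2) (le_trans hW hN)

end Replacements

section Construction

variable (k T : ℕ)

def lowAtoms : Finset (Fin (2 * k)) := {x | x.val < k}

def highAtoms : Finset (Fin (2 * k)) := (lowAtoms k)ᶜ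

def blockTuple : Fin T → Finset (Fin (2 * k)) :=
  fun t => if t.val < T / k then lowAtoms k else ∅

-- Truncated subtraction: atom `k` in the slots `t ≤ T - k`, atom `k + i` in slot `T - k + i`.
def staircaseTuple : Fin T → Finset (Fin (2 * k)) :=
  fun t => {x | x.val = k + (t.val - (T - k))}

theorem card_lowAtoms : #(lowAtoms k) = k := by
  simp only [lowAtoms, Fin.card_filter_val_lt]
  omega

theorem card_highAtoms : #(highAtoms k) = k := by
  simp only [highAtoms, card_compl, Fintype.card_fin, card_lowAtoms]
  omega

theorem sum_card_blockTuple (hdvd : k ∣ T) : ∑ t, #(blockTuple k T t) = T := by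
  simp only [blockTuple, apply_ite card, card_empty, card_lowAtoms, sum_ite, sum_const_zero,
    sum_const, smul_eq_mul, add_zero, Fin.card_filter_val_lt, min_eq_right (Nat.div_le_self T k)]
  exact Nat.div_mul_cancel hdvd

theorem card_filter_blockTuple_nonempty_le : #{t | (blockTuple k T t).Nonempty} ≤ T / k := by
  refine (card_le_card fun t ht => ?_).trans (Fin.card_filter_val_lt.trans_le (min_le_right _ _))
  rw [mem_filter_univ] at ht ⊢
  unfold blockTuple at ht
  split_ifs at ht with h
  exacts [h, absurd ht not_nonempty_empty]

theorem biUnion_blockTuple_subset : univ.biUnion (blockTuple k T) ⊆ lowAtoms k := by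
  intro x hx
  obtain ⟨t, -, hxt⟩ := mem_biUnion.mp hx
  unfold blockTuple at hxt
  split_ifs at hxt
  exacts [hxt, absurd hxt (notMem_empty x)]

theorem sum_card_staircaseTuple_le : ∑ t, #(staircaseTuple k T t) ≤ T := by
  refine (sum_le_card_nsmul _ _ 1 fun t _ => card_le_one.mpr fun x hx y hy => ?_).trans_eq
    (by simp)
  simp only [staircaseTuple, mem_filter, mem_univ, true_and] at hx hy
  exact Fin.ext (hx.trans hy.symm)

theorem biUnion_staircaseTuple_subset : univ.biUnion (staircaseTuple k T) ⊆ highAtoms k := by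
  intro x hx
  obtain ⟨t, -, hxt⟩ := mem_biUnion.mp hx
  simp only [staircaseTuple, highAtoms, lowAtoms, mem_filter, mem_compl, mem_univ,
    true_and] at hxt ⊢
  omega

theorem mem_staircaseTuple_sdiff_blockTuple {x : Fin (2 * k)} {t : Fin T} :
    x ∈ staircaseTuple k T t \ blockTuple k T t ↔ x.val = k + (t.val - (T - k)) := by
  refine ⟨fun hx => by simpa [staircaseTuple] using (mem_sdiff.mp hx).1, fun hx => ?_⟩
  refine mem_sdiff.mpr ⟨by simpa [staircaseTuple] using hx, fun hxZ => ?_⟩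
  have := biUnion_blockTuple_subset k T (mem_biUnion.mpr ⟨t, mem_univ _, hxZ⟩)
  simp only [lowAtoms, mem_filter, mem_univ, true_and] at this
  omega

theorem card_filter_mem_staircaseTuple_sdiff_of_val_eq (hkT : k ≤ T) {x : Fin (2 * k)}
    (hx : x.val = k) : #{t | x ∈ staircaseTuple k T t \ blockTuple k T t} = T - k + 1 := by
  simp only [mem_staircaseTuple_sdiff_blockTuple, hx, left_eq_add, Nat.sub_eq_zero_iff_le,
    ← Nat.lt_succ_iff, Fin.card_filter_val_lt]
  omega

theorem filter_mem_staircaseTuple_sdiff_nonempty (hkT : k ≤ T) {x : Fin (2 * k)}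
    (hx : x ∈ highAtoms k) :
    ({t | x ∈ staircaseTuple k T t \ blockTuple k T t} : Finset (Fin T)).Nonempty := by
  simp only [highAtoms, lowAtoms, mem_compl, mem_filter, mem_univ, true_and, not_lt] at hx
  refine ⟨⟨T - k + (x.val - k), by omega⟩, ?_⟩
  simp only [mem_filter, mem_univ, true_and, mem_staircaseTuple_sdiff_blockTuple]
  omega

end Construction

theorem add_card_sub_one_le_sum {α : Type*} [DecidableEq α] {s : Finset α} {f : α → ℕ}
    {a : α} (ha : a ∈ s) (h : ∀ x ∈ s, 1 ≤ f x) : f a + (#s - 1) ≤ ∑ x ∈ s, f x := by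
  rw [← add_sum_erase s f ha, ← card_erase_of_mem ha]
  simpa using card_nsmul_le_sum (s.erase a) f 1 fun x hx => h x (mem_of_mem_erase hx)

theorem le_of_mul_sub_lt_mul {k m c : ℕ} (hkm : k ≤ m) (h : m * k - k < c * m) : k ≤ c := by
  by_contra! hlt
  have : (c + 1) * m ≤ k * m := Nat.mul_le_mul_right _ hlt
  rw [add_one_mul, mul_comm k] at this
  omega

/-- the replacement sparsity parameter of the average sparsity constraint
without individual sparsity is at least `2k - 1`: there are tuples of total size at most
`T`, each using at most `k` distinct atoms from a ground set of `2k` atoms, such that no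
list of at most `2k - 2` feasible replacements covers. -/
theorem stmt4 (k T : ℕ) (hk : 0 < k) (hT : k ^ 2 ≤ T) (hdvd : k ∣ T) :
    ∃ Z Zstar : Fin T → Finset (Fin (2 * k)),
      (∑ t, (Z t).card ≤ T) ∧ (∑ t, (Zstar t).card ≤ T) ∧
      (Finset.univ.biUnion Z).card ≤ k ∧ (Finset.univ.biUnion Zstar).card ≤ k ∧
      ∀ p : ℕ, p ≤ 2 * k - 2 → ∀ W : Fin p → Fin T → Finset (Fin (2 * k)),
        ¬ CoversList {Y : Fin T → Finset (Fin (2 * k)) | ∑ t, (Y t).card ≤ T}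
            Z Zstar W := by
  have hkT : k ≤ T := (Nat.le_self_pow two_ne_zero k).trans hT
  have hkm : k ≤ T / k := (Nat.le_div_iff_mul_le hk).mpr (by nlinarith)
  have hmk : T / k * k = T := Nat.div_mul_cancel hdvd
  refine ⟨blockTuple k T, staircaseTuple k T, (sum_card_blockTuple k T hdvd).le,
    sum_card_staircaseTuple_le k T,
    (card_le_card (biUnion_blockTuple_subset k T)).trans (card_lowAtoms k).le,
    (card_le_card (biUnion_staircaseTuple_subset k T)).trans (card_highAtoms k).le,
    fun p hp W hcov => ?_⟩
  set c := fun x => #(addingReplacements (blockTuple k T) W x)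
  have hmul (x : Fin (2 * k)) :
      #{t | x ∈ staircaseTuple k T t \ blockTuple k T t} ≤ c x * (T / k) :=
    (hcov.card_filter_le_mul (sum_card_blockTuple k T hdvd).ge x).trans
      (Nat.mul_le_mul_left _ (card_filter_blockTuple_nonempty_le k T))
  let x₀ : Fin (2 * k) := ⟨k, by omega⟩
  have hx₀ : k ≤ c x₀ := by
    refine le_of_mul_sub_lt_mul hkm (Nat.add_one_le_iff.mp ?_)
    rw [hmk, ← card_filter_mem_staircaseTuple_sdiff_of_val_eq k T hkT (x := x₀) rfl]
    exact hmul x₀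
  have hpos (x) (hx : x ∈ highAtoms k) : 1 ≤ c x :=
    Nat.pos_of_mul_pos_right ((card_pos.mpr
      (filter_mem_staircaseTuple_sdiff_nonempty k T hkT hx)).trans_le (hmul x))
  have hx₀_mem : x₀ ∈ highAtoms k := by
    simp only [highAtoms, lowAtoms, mem_compl, mem_filter_univ, not_lt]
    rfl
  have hsum := add_card_sub_one_le_sum hx₀_mem hpos
  have hp' : ∑ x ∈ highAtoms k, c x ≤ p := hcov.sum_card_addingReplacements_le _
  rw [card_highAtoms] at hsum
  omega
end

section
/- Let s be a positive integer and M > 0, and suppose u is M-smooth on Ω_{s,2}. Let Z, Z' ⊆ V with |Z| ≤ s, |Z'| ≤ s and |Z △ Z'| ≤ 2 (symmetric difference of size at most 2). Then f(Z') − f(Z) ≥ (1/(2M))·‖(∇u(w^{(Z)}))_{Z' \ Z}‖² − (M/2)·‖(w^{(Z)})_{Z \ Z'}‖². -/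
/-!
Compare `w^{(Z)}` with the trial point `y = w^{(Z)} - w^{(Z)}_{Z \ Z'} + M⁻¹ ∇u(w^{(Z)})_{Z' \ Z}`,
which is supported in `Z'` and differs from `w^{(Z)}` only on `Z △ Z'`. Smoothness bounds
`u(y) - u(w^{(Z)})` below by a quadratic model; since the gradient vanishes on `Z` and the two
restricted vectors have disjoint supports, that model evaluates exactly to the right-hand side,
and `f(Z') ≥ u(y) - u(0)` by maximality of `w^{(Z')}`.
-/

open scoped RealInnerProductSpace

/-- The support of a vector, as a finset. -/
noncomputable def suppF {V : Type*} [Fintype V] [DecidableEq V]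
    (w : EuclideanSpace ℝ V) : Finset V :=
  Finset.univ.filter fun a => w a ≠ 0

/-- The restriction `w_S` of a vector `w` to a set `S` of coordinates:
it agrees with `w` on `S` and is zero elsewhere. -/
noncomputable def restr {V : Type*} [Fintype V] [DecidableEq V]
    (w : EuclideanSpace ℝ V) (S : Finset V) : EuclideanSpace ℝ V :=
  WithLp.toLp 2 (fun a => if a ∈ S then w a else 0)

lemma inner_sub_half_mul_norm_sq_inv_smul_sub {E : Type*} [NormedAddCommGroup E]
    [InnerProductSpace ℝ E] {M : ℝ} (hM : M ≠ 0) {g d e : E}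
    (hgd : ⟪g, d⟫ = ‖d‖ ^ 2) (hge : ⟪g, e⟫ = 0) (hde : ⟪d, e⟫ = 0) :
    ⟪g, M⁻¹ • d - e⟫ - M / 2 * ‖M⁻¹ • d - e‖ ^ 2
      = 1 / (2 * M) * ‖d‖ ^ 2 - M / 2 * ‖e‖ ^ 2 := by
  have hnorm : ‖M⁻¹ • d - e‖ ^ 2 = M⁻¹ ^ 2 * ‖d‖ ^ 2 + ‖e‖ ^ 2 := by
    rw [norm_sub_sq_real, real_inner_smul_left, hde, norm_smul, mul_pow, Real.norm_eq_abs,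
      sq_abs]
    ring
  rw [hnorm, inner_sub_right, real_inner_smul_right, hgd, hge]
  field_simp
  ring

section Coordinates

variable {V : Type*} [Fintype V] [DecidableEq V]

lemma mem_suppF {w : EuclideanSpace ℝ V} {a : V} : a ∈ suppF w ↔ w a ≠ 0 := by
  simp [suppF]

lemma suppF_subset_iff {w : EuclideanSpace ℝ V} {S : Finset V} :
    suppF w ⊆ S ↔ ∀ a ∉ S, w a = 0 := by
  simp only [Finset.subset_iff, mem_suppF]
  exact forall_congr' fun _ => not_imp_comm

lemma suppF_sub_subset (x y : EuclideanSpace ℝ V) : suppF (x - y) ⊆ suppF x ∪ suppF y := by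
  intro a
  simp only [Finset.mem_union, mem_suppF, PiLp.sub_apply]
  contrapose!
  rintro ⟨hx, hy⟩
  simp [hx, hy]

lemma suppF_smul_subset (c : ℝ) (x : EuclideanSpace ℝ V) : suppF (c • x) ⊆ suppF x := by
  intro a
  simp only [mem_suppF, PiLp.smul_apply, smul_eq_mul]
  exact right_ne_zero_of_mul

@[simp]
lemma restr_apply (w : EuclideanSpace ℝ V) (S : Finset V) (a : V) :
    restr w S a = if a ∈ S then w a else 0 :=
  rfl

lemma suppF_restr_subset (w : EuclideanSpace ℝ V) (S : Finset V) : suppF (restr w S) ⊆ S :=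
  suppF_subset_iff.2 fun a ha => by simp [ha]

lemma inner_restr_right (v w : EuclideanSpace ℝ V) (S : Finset V) :
    ⟪v, restr w S⟫ = ∑ a ∈ S, v a * w a := by
  simp [PiLp.inner_apply, mul_comm, Finset.sum_ite_mem]

lemma inner_restr_right_eq_zero {v : EuclideanSpace ℝ V} {S : Finset V}
    (hv : ∀ a ∈ S, v a = 0) (w : EuclideanSpace ℝ V) : ⟪v, restr w S⟫ = 0 := by
  rw [inner_restr_right]
  exact Finset.sum_eq_zero fun a ha => by simp [hv a ha]

lemma inner_restr_right_self (v : EuclideanSpace ℝ V) (S : Finset V) :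
    ⟪v, restr v S⟫ = ‖restr v S‖ ^ 2 := by
  rw [← real_inner_self_eq_norm_sq, inner_restr_right, inner_restr_right]
  exact Finset.sum_congr rfl fun a ha => by simp [ha]

end Coordinates

theorem stmt6_general {V : Type*} [Fintype V] [DecidableEq V]
    (s : ℕ) (M : ℝ) (hM : 0 < M)
    (u : EuclideanSpace ℝ V → ℝ)
    (hsmooth : ∀ x y : EuclideanSpace ℝ V,
      (suppF x).card ≤ s → (suppF y).card ≤ s → (suppF (x - y)).card ≤ 2 →
      u y - u x - ⟪gradient u x, y - x⟫ ≥ -(M / 2) * ‖y - x‖ ^ 2)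
    (w : Finset V → EuclideanSpace ℝ V)
    (hw_supp : ∀ Z : Finset V, suppF (w Z) ⊆ Z)
    (hw_max : ∀ Z : Finset V, ∀ z : EuclideanSpace ℝ V, suppF z ⊆ Z → u z ≤ u (w Z))
    (hw_grad : ∀ Z : Finset V, ∀ a ∈ Z, gradient u (w Z) a = 0)
    (Z Z' : Finset V) (hZ : Z.card ≤ s) (hZ' : Z'.card ≤ s)
    (hsym : ((Z \ Z') ∪ (Z' \ Z)).card ≤ 2) :
    (u (w Z') - u 0) - (u (w Z) - u 0) ≥
      (1 / (2 * M)) * ‖restr (gradient u (w Z)) (Z' \ Z)‖ ^ 2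
        - (M / 2) * ‖restr (w Z) (Z \ Z')‖ ^ 2 := by
  set g := gradient u (w Z)
  set d := restr g (Z' \ Z)
  set e := restr (w Z) (Z \ Z')
  have hwZ : ∀ a ∉ Z, w Z a = 0 := suppF_subset_iff.1 (hw_supp Z)
  set y := w Z - e + M⁻¹ • d with hy_def
  have hy : suppF y ⊆ Z' := suppF_subset_iff.2 fun a ha => by
    by_cases haZ : a ∈ Z <;> simp [y, d, e, ha, haZ, hwZ]
  have hstep : y - w Z = M⁻¹ • d - e := by rw [hy_def]; abel
  have hdiff : suppF (w Z - y) ⊆ (Z \ Z') ∪ (Z' \ Z) := by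
    rw [show w Z - y = e - M⁻¹ • d by rw [hy_def]; abel]
    exact (suppF_sub_subset _ _).trans <| Finset.union_subset_union
      (suppF_restr_subset _ _) ((suppF_smul_subset _ _).trans (suppF_restr_subset _ _))
  have hmodel := inner_sub_half_mul_norm_sq_inv_smul_sub (d := d) (e := e) hM.ne'
    (inner_restr_right_self g _)
    (inner_restr_right_eq_zero (fun a ha => hw_grad Z a (Finset.mem_sdiff.1 ha).1) _)
    (inner_restr_right_eq_zero (fun a ha => by simp [d, (Finset.mem_sdiff.1 ha).1]) _)
  have hsm := hsmooth (w Z) y ((Finset.card_le_card (hw_supp Z)).trans hZ)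
    ((Finset.card_le_card hy).trans hZ') ((Finset.card_le_card hdiff).trans hsym)
  rw [hstep] at hsm
  linarith [hw_max Z' y hy]

/-- if `u` is `M`-smooth on `Ω_{s,2}` then for `|Z|, |Z'| ≤ s` with
`|Z △ Z'| ≤ 2`, `f(Z') - f(Z) ≥ (1/(2M))‖(∇u(w^{(Z)}))_{Z' \ Z}‖² - (M/2)‖(w^{(Z)})_{Z \ Z'}‖²`. -/
theorem stmt6 {V : Type*} [Fintype V] [DecidableEq V]
    (s : ℕ) (hs : 0 < s) (M : ℝ) (hM : 0 < M)
    (u : EuclideanSpace ℝ V → ℝ) (hu : Differentiable ℝ u)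
    (hsmooth : ∀ x y : EuclideanSpace ℝ V,
      (suppF x).card ≤ s → (suppF y).card ≤ s → (suppF (x - y)).card ≤ 2 →
      u y - u x - ⟪gradient u x, y - x⟫ ≥ -(M / 2) * ‖y - x‖ ^ 2)
    (w : Finset V → EuclideanSpace ℝ V)
    (hw_supp : ∀ Z : Finset V, suppF (w Z) ⊆ Z)
    (hw_max : ∀ Z : Finset V, ∀ z : EuclideanSpace ℝ V, suppF z ⊆ Z → u z ≤ u (w Z))
    (hw_grad : ∀ Z : Finset V, ∀ a ∈ Z, gradient u (w Z) a = 0)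
    (Z Z' : Finset V) (hZ : Z.card ≤ s) (hZ' : Z'.card ≤ s)
    (hsym : ((Z \ Z') ∪ (Z' \ Z)).card ≤ 2) :
    (u (w Z') - u 0) - (u (w Z) - u 0) ≥
      (1 / (2 * M)) * ‖restr (gradient u (w Z)) (Z' \ Z)‖ ^ 2
        - (M / 2) * ‖restr (w Z) (Z \ Z')‖ ^ 2 :=
  stmt6_general s M hM u hsmooth w hw_supp hw_max hw_grad Z Z' hZ hZ' hsym
end

section
/- Let s be a positive integer and m > 0, and suppose u is m-strongly concave on Ω_{2s}. Let Z ⊆ V with |Z| ≤ s. Then f(Z) ≥ (m/2)·‖w^{(Z)}‖², and consequently f(Z) ≥ (m/2)·‖(w^{(Z)})_S‖² for every S ⊆ V. -/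
open scoped RealInnerProductSpace

section Support

variable {V : Type*} [Fintype V] [DecidableEq V]

@[simp]
lemma suppF_zero : suppF (0 : EuclideanSpace ℝ V) = ∅ := by
  simp [suppF]

lemma apply_eq_zero_of_suppF_subset {w : EuclideanSpace ℝ V} {Z : Finset V}
    (hw : suppF w ⊆ Z) {a : V} (ha : a ∉ Z) : w a = 0 := by
  by_contra h
  exact ha (hw (by simp [suppF, h]))

lemma inner_eq_zero_of_suppF_subset {g w : EuclideanSpace ℝ V} {Z : Finset V}
    (hw : suppF w ⊆ Z) (hg : ∀ a ∈ Z, g a = 0) : ⟪g, w⟫ = 0 := by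
  rw [PiLp.inner_apply]
  refine Finset.sum_eq_zero fun a _ => ?_
  by_cases ha : a ∈ Z
  · simp [hg a ha]
  · simp [apply_eq_zero_of_suppF_subset hw ha]

lemma norm_restr_le (w : EuclideanSpace ℝ V) (S : Finset V) : ‖restr w S‖ ≤ ‖w‖ := by
  rw [EuclideanSpace.norm_eq, EuclideanSpace.norm_eq]
  gcongr with a
  by_cases ha : a ∈ S <;> simp [restr, ha]

end Support

theorem stmt8_general {V : Type*} [Fintype V] [DecidableEq V]
    (s : ℕ) (m : ℝ) (hm : 0 < m)
    (u : EuclideanSpace ℝ V → ℝ)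
    (hconc : ∀ x y : EuclideanSpace ℝ V,
      (suppF x).card ≤ 2 * s → (suppF y).card ≤ 2 * s → (suppF (x - y)).card ≤ 2 * s →
      u y - u x - ⟪gradient u x, y - x⟫ ≤ -(m / 2) * ‖y - x‖ ^ 2)
    (w : Finset V → EuclideanSpace ℝ V)
    (hw_supp : ∀ Z : Finset V, suppF (w Z) ⊆ Z)
    (hw_grad : ∀ Z : Finset V, ∀ a ∈ Z, gradient u (w Z) a = 0)
    (Z : Finset V) (hZ : Z.card ≤ s) :
    (u (w Z) - u 0 ≥ (m / 2) * ‖w Z‖ ^ 2) ∧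
      (∀ S : Finset V, u (w Z) - u 0 ≥ (m / 2) * ‖restr (w Z) S‖ ^ 2) := by
  have hsupp : (suppF (w Z)).card ≤ 2 * s :=
    (Finset.card_le_card (hw_supp Z)).trans (by omega)
  -- strong concavity between `w Z` and `0`; the linear term vanishes by the first-order condition
  have hstat : ⟪gradient u (w Z), 0 - w Z⟫ = 0 := by
    rw [zero_sub, inner_neg_right, inner_eq_zero_of_suppF_subset (hw_supp Z) (hw_grad Z),
      neg_zero]
  have hconc0 := hconc (w Z) 0 hsupp (by simp) (by simpa using hsupp)
  rw [hstat, zero_sub, norm_neg] at hconc0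
  have hfull : u (w Z) - u 0 ≥ (m / 2) * ‖w Z‖ ^ 2 := by linarith
  refine ⟨hfull, fun S => le_trans ?_ hfull⟩
  gcongr
  exact norm_restr_le (w Z) S

/-- if `u` is `m`-strongly concave on `Ω_{2s}` then for `|Z| ≤ s`,
`f(Z) ≥ (m/2)‖w^{(Z)}‖²`, and consequently `f(Z) ≥ (m/2)‖(w^{(Z)})_S‖²` for every `S`. -/
theorem stmt8 {V : Type*} [Fintype V] [DecidableEq V]
    (s : ℕ) (hs : 0 < s) (m : ℝ) (hm : 0 < m)
    (u : EuclideanSpace ℝ V → ℝ) (hu : Differentiable ℝ u)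
    (hconc : ∀ x y : EuclideanSpace ℝ V,
      (suppF x).card ≤ 2 * s → (suppF y).card ≤ 2 * s → (suppF (x - y)).card ≤ 2 * s →
      u y - u x - ⟪gradient u x, y - x⟫ ≤ -(m / 2) * ‖y - x‖ ^ 2)
    (w : Finset V → EuclideanSpace ℝ V)
    (hw_supp : ∀ Z : Finset V, suppF (w Z) ⊆ Z)
    (hw_max : ∀ Z : Finset V, ∀ z : EuclideanSpace ℝ V, suppF z ⊆ Z → u z ≤ u (w Z))
    (hw_grad : ∀ Z : Finset V, ∀ a ∈ Z, gradient u (w Z) a = 0)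
    (Z : Finset V) (hZ : Z.card ≤ s) :
    (u (w Z) - u 0 ≥ (m / 2) * ‖w Z‖ ^ 2) ∧
      (∀ S : Finset V, u (w Z) - u 0 ≥ (m / 2) * ‖restr (w Z) S‖ ^ 2) :=
  stmt8_general s m hm u hconc w hw_supp hw_grad Z hZ
end
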